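/- Let B and B' be set systems on sets X and X' respectively, and let B ⊠ B' = { B × B' : B ∈ B, B' ∈ B' } on X × X'. Then the breadth of B ⊠ B' is at most the breadth of B plus the breadth of B'. -/
import Mathlib


/-- `𝓑` has breadth at most `d`: every nonempty intersection of more than `d`
members equals an intersection of `d` of them. -/
def BreadthLE {X : Type*} (𝓑 : Set (Set X)) (d : ℕ) : Prop :=
  ∀ (m : ℕ) (A : Fin m → Set X), d < m → (∀ i, A i ∈ 𝓑) →
    (⋂ i, A i).Nonempty →
    ∃ s : Finset (Fin m), s.card = d ∧ (⋂ i ∈ s, A i) = ⋂ i, A i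

/-- The breadth of `𝓑 ⊠ 𝓑' = {B × B' : B ∈ 𝓑, B' ∈ 𝓑'}` is at most the sum of the
breadths of `𝓑` and `𝓑'`. -/
theorem stmt17 {X X' : Type*} (𝓑 : Set (Set X)) (𝓑' : Set (Set X')) (d d' : ℕ)
    (hd : 0 < d) (hd' : 0 < d') (h1 : BreadthLE 𝓑 d) (h2 : BreadthLE 𝓑' d') :
    BreadthLE {S : Set (X × X') | ∃ B ∈ 𝓑, ∃ B' ∈ 𝓑', S = B ×ˢ B'} (d + d') := by
  intro m A hm hA hne
  choose B hB B' hB' hAeq using hA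
  obtain ⟨⟨x, y⟩, hxy⟩ := hne
  have hx : ∀ i, x ∈ B i := fun i => by
    have := Set.mem_iInter.1 hxy i; rw [hAeq i] at this; exact this.1
  have hy : ∀ i, y ∈ B' i := fun i => by
    have := Set.mem_iInter.1 hxy i; rw [hAeq i] at this; exact this.2
  obtain ⟨s, hscard, hs⟩ := h1 m B (by omega) hB ⟨x, Set.mem_iInter.2 hx⟩
  obtain ⟨s', hs'card, hs'⟩ := h2 m B' (by omega) hB' ⟨y, Set.mem_iInter.2 hy⟩
  have hcard : (s ∪ s').card ≤ d + d' := by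
    calc (s ∪ s').card ≤ s.card + s'.card := Finset.card_union_le _ _
    _ = d + d' := by omega
  obtain ⟨t, hst, htcard⟩ := Finset.exists_superset_card_eq hcard
    (by simpa using Nat.le_of_lt hm)
  refine ⟨t, htcard, Set.Subset.antisymm ?_ ?_⟩
  · intro z hz
    have hz1 : z.1 ∈ ⋂ i, B i := by
      rw [← hs]
      exact Set.mem_iInter₂.2 fun i hi => by
        have := Set.mem_iInter₂.1 hz i (hst (Finset.mem_union_left _ hi))
        rw [hAeq i] at this; exact this.1
    have hz2 : z.2 ∈ ⋂ i, B' i := by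
      rw [← hs']
      exact Set.mem_iInter₂.2 fun i hi => by
        have := Set.mem_iInter₂.1 hz i (hst (Finset.mem_union_right _ hi))
        rw [hAeq i] at this; exact this.2
    exact Set.mem_iInter.2 fun i => by
      rw [hAeq i]
      exact ⟨Set.mem_iInter.1 hz1 i, Set.mem_iInter.1 hz2 i⟩
  · intro z hz
    exact Set.mem_iInter₂.2 fun i _ => Set.mem_iInter.1 hz i
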